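/- arXiv:1710.01208 — 3 statements merged into one kernel-verified Lean document; each statement's English description precedes it below -/
import Mathlib

section
/- Let L ≥ 1 and p_1,…,p_L be fixed, and let G = G(p_L). Then for every degree distribution F ∈ F(p_L), z̃_F ≤ z̃_G. -/
open scoped BigOperators

/-- A degree distribution: a sequence of nonnegative probabilities on the positive
integers summing to one, with finite mean and `p 2 ≠ 1`. -/
structure DegreeDist where
  p : ℕ → ℝ
  nonneg : ∀ d, 0 ≤ p d
  zero : p 0 = 0
  psummable : Summable p
  sum_one : ∑' d : ℕ, p d = 1
  mean_summable : Summable fun d : ℕ => (d : ℝ) * p d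
  two_ne_one : p 2 ≠ 1

/-- The mean `μ_F` of a degree distribution. -/
noncomputable def mu (F : DegreeDist) : ℝ := ∑' d : ℕ, (d : ℝ) * F.p d

/-- The probability generating function `g_F`. -/
noncomputable def pgf (F : DegreeDist) (s : ℝ) : ℝ := ∑' d : ℕ, F.p d * s ^ d

/-- The derivative `g_F'` of the probability generating function. -/
noncomputable def pgfD (F : DegreeDist) (s : ℝ) : ℝ := ∑' d : ℕ, (d : ℝ) * F.p d * s ^ (d - 1)

/-- `z` is the smallest `s ∈ [0,1]` with `m * s = g_F'(s)`.  Taking `m = mu F` gives `z̃_F`;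
taking `m = μ` gives `z̃_F^{(μ)}`. -/
def IsSmallestRoot (F : DegreeDist) (m z : ℝ) : Prop :=
  z ∈ Set.Icc (0 : ℝ) 1 ∧ m * z = pgfD F z ∧
    ∀ s ∈ Set.Icc (0 : ℝ) 1, m * s = pgfD F s → z ≤ s

/-- Membership in the class `F(p_L)`: the first `L` probabilities agree with `p`. -/
def MemF (L : ℕ) (p : ℕ → ℝ) (F : DegreeDist) : Prop :=
  ∀ d, 1 ≤ d → d ≤ L → F.p d = p d

/-- The remaining mass `p_{>L} = 1 - ∑_{i=1}^L p_i`. -/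
noncomputable def pGt (L : ℕ) (p : ℕ → ℝ) : ℝ := 1 - ∑ i ∈ Finset.Icc 1 L, p i

/-- The distribution `G = G(p_L)`: all remaining mass at `L+1`. -/
def IsG (L : ℕ) (p : ℕ → ℝ) (G : DegreeDist) : Prop :=
  (∀ d, 1 ≤ d → d ≤ L → G.p d = p d) ∧
  G.p (L + 1) = pGt L p ∧
  ∀ d, L + 1 < d → G.p d = 0

/-- `κ = (μ - ∑_{d=1}^L d p_d) / p_{>L}`. -/
noncomputable def kappa (L : ℕ) (p : ℕ → ℝ) (μ : ℝ) : ℝ :=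
  (μ - ∑ d ∈ Finset.Icc 1 L, (d : ℝ) * p d) / pGt L p

/-- `r_m = (κ - (L+1)) / (m - (L+1))`. -/
noncomputable def rmass (L : ℕ) (κ : ℝ) (m : ℕ) : ℝ :=
  (κ - ((L : ℝ) + 1)) / ((m : ℝ) - ((L : ℝ) + 1))

/-- The distribution `G_m`: mass `(1-r_m) p_{>L}` at `L+1` and `r_m p_{>L}` at `m`. -/
def IsGm (L : ℕ) (p : ℕ → ℝ) (μ : ℝ) (m : ℕ) (Gm : DegreeDist) : Prop :=
  (∀ d, 1 ≤ d → d ≤ L → Gm.p d = p d) ∧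
  Gm.p (L + 1) = (1 - rmass L (kappa L p μ) m) * pGt L p ∧
  Gm.p m = rmass L (kappa L p μ) m * pGt L p ∧
  ∀ d, L + 1 < d → d ≠ m → Gm.p d = 0

/-- The distribution `H = H(μ, p_L)`: remaining mass at `⌊κ⌋` and `⌊κ⌋+1`, preserving mean `μ`. -/
def IsH (L : ℕ) (p : ℕ → ℝ) (μ : ℝ) (H : DegreeDist) : Prop :=
  (∀ d, 1 ≤ d → d ≤ L → H.p d = p d) ∧
  H.p ⌊kappa L p μ⌋₊ = ((⌊kappa L p μ⌋₊ : ℝ) + 1 - kappa L p μ) * pGt L p ∧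
  H.p (⌊kappa L p μ⌋₊ + 1) = (kappa L p μ - (⌊kappa L p μ⌋₊ : ℝ)) * pGt L p ∧
  ∀ d, L < d → d ≠ ⌊kappa L p μ⌋₊ → d ≠ ⌊kappa L p μ⌋₊ + 1 → H.p d = 0

/-- With `x = s ^ L`, this compares the mediants `(A + t x) / (a + t)`: they decrease in `t`
as soon as `A / a ≥ x`. -/
lemma mediant_mul_le {a A x t t' : ℝ} (hA : x * a ≤ A) (ht : t ≤ t') :
    (a + t) * (A + t' * x) ≤ (a + t') * (A + t * x) := by
  nlinarith [mul_nonneg (sub_nonneg.2 ht) (sub_nonneg.2 hA)]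

namespace DegreeDist

variable (F : DegreeDist) {s : ℝ}

lemma derivTerm_nonneg (hs : 0 ≤ s) (d : ℕ) : 0 ≤ (d : ℝ) * F.p d * s ^ (d - 1) :=
  mul_nonneg (mul_nonneg d.cast_nonneg (F.nonneg d)) (pow_nonneg hs _)

lemma derivTerm_le (hs : s ∈ Set.Icc (0 : ℝ) 1) (d : ℕ) :
    (d : ℝ) * F.p d * s ^ (d - 1) ≤ d * F.p d :=
  mul_le_of_le_one_right (mul_nonneg d.cast_nonneg (F.nonneg d)) (pow_le_one₀ hs.1 hs.2)

lemma summable_derivTerm (hs : s ∈ Set.Icc (0 : ℝ) 1) :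
    Summable fun d : ℕ => (d : ℝ) * F.p d * s ^ (d - 1) :=
  F.mean_summable.of_nonneg_of_le (F.derivTerm_nonneg hs.1) (F.derivTerm_le hs)

lemma continuousOn_pgfD : ContinuousOn (pgfD F) (Set.Icc 0 1) :=
  continuousOn_tsum (fun _ => by fun_prop) F.mean_summable fun d _ hs => by
    rw [Real.norm_of_nonneg (F.derivTerm_nonneg hs.1 d)]
    exact F.derivTerm_le hs d

lemma pgfD_nonneg (hs : 0 ≤ s) : 0 ≤ pgfD F s :=
  tsum_nonneg (F.derivTerm_nonneg hs)

lemma mu_eq_pgfD_one : mu F = pgfD F 1 := by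
  simp [mu, pgfD]

noncomputable def headD (L : ℕ) (s : ℝ) : ℝ :=
  ∑ d ∈ Finset.range (L + 1), (d : ℝ) * F.p d * s ^ (d - 1)

noncomputable def tailD (L : ℕ) (s : ℝ) : ℝ :=
  ∑' n : ℕ, ((n + (L + 1) : ℕ) : ℝ) * F.p (n + (L + 1)) * s ^ (n + L)

lemma summable_tailD_term (L : ℕ) (hs : s ∈ Set.Icc (0 : ℝ) 1) :
    Summable fun n : ℕ => ((n + (L + 1) : ℕ) : ℝ) * F.p (n + (L + 1)) * s ^ (n + L) :=
  (summable_nat_add_iff (f := fun d : ℕ => (d : ℝ) * F.p d * s ^ (d - 1)) (L + 1)).2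
    (F.summable_derivTerm hs)

lemma pgfD_eq_headD_add_tailD (L : ℕ) (hs : s ∈ Set.Icc (0 : ℝ) 1) :
    pgfD F s = F.headD L s + F.tailD L s :=
  ((F.summable_derivTerm hs).sum_add_tsum_nat_add (L + 1)).symm

lemma pow_mul_headD_one_le (L : ℕ) (hs : s ∈ Set.Icc (0 : ℝ) 1) :
    s ^ L * F.headD L 1 ≤ F.headD L s := by
  rw [headD, headD, Finset.mul_sum]
  refine Finset.sum_le_sum fun d hd => ?_
  have hdL : d - 1 ≤ L := by have := Finset.mem_range.1 hd; omega
  rw [one_pow, mul_one, mul_comm]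
  exact mul_le_mul_of_nonneg_left (pow_le_pow_of_le_one hs.1 hs.2 hdL)
    (mul_nonneg d.cast_nonneg (F.nonneg d))

lemma tailD_le_pow_mul_tailD_one (L : ℕ) (hs : s ∈ Set.Icc (0 : ℝ) 1) :
    F.tailD L s ≤ s ^ L * F.tailD L 1 := by
  rw [tailD, tailD, ← tsum_mul_left]
  refine (F.summable_tailD_term L hs).tsum_le_tsum (fun n => ?_)
    ((F.summable_tailD_term L ⟨zero_le_one, le_rfl⟩).mul_left _)
  have hterm := mul_nonneg (Nat.cast_nonneg (α := ℝ) (n + (L + 1))) (F.nonneg (n + (L + 1)))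
  rw [one_pow, mul_one, pow_add, ← mul_assoc, mul_comm (s ^ L)]
  exact mul_le_mul_of_nonneg_right (mul_le_of_le_one_right hterm (pow_le_one₀ hs.1 hs.2))
    (pow_nonneg hs.1 L)

lemma mul_tsum_tail_le_tailD_one (L : ℕ) :
    ((L : ℝ) + 1) * ∑' n : ℕ, F.p (n + (L + 1)) ≤ F.tailD L 1 := by
  rw [tailD, ← tsum_mul_left]
  refine ((summable_nat_add_iff (L + 1)).2 F.psummable |>.mul_left _).tsum_le_tsum
    (fun n => ?_) (F.summable_tailD_term L ⟨zero_le_one, le_rfl⟩)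
  rw [one_pow, mul_one]
  exact mul_le_mul_of_nonneg_right (by push_cast; linarith [n.cast_nonneg (α := ℝ)])
    (F.nonneg _)

variable {F}

lemma p_eq_of_memF {G : DegreeDist} {L : ℕ} {p : ℕ → ℝ} (hF : MemF L p F) (hG : MemF L p G)
    {d : ℕ} (hd : d ≤ L) : F.p d = G.p d := by
  rcases Nat.eq_zero_or_pos d with rfl | hd0
  · rw [F.zero, G.zero]
  · rw [hF d hd0 hd, hG d hd0 hd]

lemma headD_eq_of_memF {G : DegreeDist} {L : ℕ} {p : ℕ → ℝ} (hF : MemF L p F)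
    (hG : MemF L p G) (s : ℝ) : F.headD L s = G.headD L s :=
  Finset.sum_congr rfl fun d hd => by
    rw [p_eq_of_memF hF hG (Nat.lt_succ_iff.1 (Finset.mem_range.1 hd))]

lemma tsum_tail_eq_pGt {L : ℕ} {p : ℕ → ℝ} (hF : MemF L p F) :
    ∑' n : ℕ, F.p (n + (L + 1)) = pGt L p := by
  have hsplit := F.psummable.sum_add_tsum_nat_add (L + 1)
  have hhead : ∑ d ∈ Finset.range (L + 1), F.p d = ∑ d ∈ Finset.Icc 1 L, p d := by
    rw [Finset.range_eq_Ico, Finset.sum_eq_sum_Ico_succ_bot (Nat.succ_pos L), F.zero, zero_add]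
    exact Finset.sum_congr rfl fun d hd => by
      obtain ⟨h1, h2⟩ := Finset.mem_Ico.1 hd
      exact hF d h1 (Nat.lt_succ_iff.1 h2)
  rw [F.sum_one, hhead] at hsplit
  rw [pGt]
  linarith

lemma tailD_of_isG {L : ℕ} {p : ℕ → ℝ} (hF : IsG L p F) (s : ℝ) :
    F.tailD L s = ((L : ℝ) + 1) * pGt L p * s ^ L := by
  rw [tailD, tsum_eq_single 0 fun n hn => by rw [hF.2.2 (n + (L + 1)) (by omega)]; ring,
    zero_add, hF.2.1]
  push_cast
  ring

/-- At a root `s` of `μ_G s = g_G'(s)`, the function `μ_F s - g_F'(s)` is nonnegative: `F` and `G`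
share the head of `g'`, and pushing the tail mass of `G` beyond `L + 1` raises `μ` more than it
raises `g'(s)`. -/
lemma pgfD_le_mu_mul_of_isG_root {L : ℕ} {p : ℕ → ℝ} (hplt : ∑ i ∈ Finset.Icc 1 L, p i < 1)
    {G : DegreeDist} (hG : IsG L p G) (hF : MemF L p F) (hs : s ∈ Set.Icc (0 : ℝ) 1)
    (hroot : mu G * s = pgfD G s) : pgfD F s ≤ mu F * s := by
  have h1 : (1 : ℝ) ∈ Set.Icc (0 : ℝ) 1 := ⟨zero_le_one, le_rfl⟩
  set a := F.headD L 1
  set A := F.headD L s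
  set tG := ((L : ℝ) + 1) * pGt L p
  have htG : 0 < tG := mul_pos (by positivity) (by rw [pGt]; linarith)
  have ha : 0 ≤ a := Finset.sum_nonneg fun d _ => F.derivTerm_nonneg zero_le_one d
  have htGF : tG ≤ F.tailD L 1 := by
    simpa only [tsum_tail_eq_pGt hF] using F.mul_tsum_tail_le_tailD_one L
  have hrootG : (a + tG) * s = A + tG * s ^ L := by
    rwa [mu_eq_pgfD_one, G.pgfD_eq_headD_add_tailD L h1, G.pgfD_eq_headD_add_tailD L hs,
      tailD_of_isG hG, tailD_of_isG hG, one_pow, mul_one, ← headD_eq_of_memF hF hG.1,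
      ← headD_eq_of_memF hF hG.1] at hroot
  rw [mu_eq_pgfD_one, F.pgfD_eq_headD_add_tailD L hs, F.pgfD_eq_headD_add_tailD L h1]
  refine le_of_mul_le_mul_left ?_ (by linarith : 0 < a + tG)
  calc (a + tG) * (A + F.tailD L s)
      ≤ (a + tG) * (A + F.tailD L 1 * s ^ L) := by
        gcongr
        linarith [F.tailD_le_pow_mul_tailD_one L hs]
    _ ≤ (a + F.tailD L 1) * (A + tG * s ^ L) :=
        mediant_mul_le (F.pow_mul_headD_one_le L hs) htGF
    _ = (a + tG) * ((a + F.tailD L 1) * s) := by rw [← hrootG]; ring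

end DegreeDist

/-- `m t - g_F'(t)` is `≤ 0` at `t = 0`, so the intermediate value theorem gives a root in
`[0, s]`. -/
lemma IsSmallestRoot.le_of_pgfD_le {F : DegreeDist} {m z s : ℝ} (hz : IsSmallestRoot F m z)
    (hs : s ∈ Set.Icc (0 : ℝ) 1) (h : pgfD F s ≤ m * s) : z ≤ s := by
  have hcont : ContinuousOn (fun t => m * t - pgfD F t) (Set.Icc 0 s) :=
    (continuousOn_const.mul continuousOn_id).sub
      (F.continuousOn_pgfD.mono (Set.Icc_subset_Icc le_rfl hs.2))
  have hsign : (0 : ℝ) ∈ Set.Icc (m * 0 - pgfD F 0) (m * s - pgfD F s) :=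
    ⟨by linarith [F.pgfD_nonneg le_rfl], by linarith⟩
  obtain ⟨t, ht, hroot⟩ := intermediate_value_Icc hs.1 hcont hsign
  exact (hz.2.2 t ⟨ht.1, ht.2.trans hs.2⟩ (sub_eq_zero.1 hroot)).trans ht.2

theorem tail_does_not_determine_giant_stmt3_general
    (L : ℕ) (p : ℕ → ℝ)
    (hplt : ∑ i ∈ Finset.Icc 1 L, p i < 1)
    (G : DegreeDist) (hG : IsG L p G)
    (F : DegreeDist) (hF : MemF L p F)
    (zF zG : ℝ)
    (hzF : IsSmallestRoot F (mu F) zF)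
    (hzG : IsSmallestRoot G (mu G) zG) :
    zF ≤ zG := by
  obtain ⟨hs, hroot, -⟩ := hzG
  exact hzF.le_of_pgfD_le hs (DegreeDist.pgfD_le_mu_mul_of_isG_root hplt hG hF hs hroot)

/-- For every `F ∈ F(p_L)`, `z̃_F ≤ z̃_G`. -/
theorem tail_does_not_determine_giant_stmt3
    (L : ℕ) (hL : 1 ≤ L) (p : ℕ → ℝ)
    (hp : ∀ i, 0 ≤ p i) (hplt : ∑ i ∈ Finset.Icc 1 L, p i < 1)
    (G : DegreeDist) (hG : IsG L p G)
    (F : DegreeDist) (hF : MemF L p F)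
    (zF zG : ℝ)
    (hzF : IsSmallestRoot F (mu F) zF)
    (hzG : IsSmallestRoot G (mu G) zG) :
    zF ≤ zG :=
  tail_does_not_determine_giant_stmt3_general L p hplt G hG F hF zF zG hzF hzG
end

section
/- Fix L ≥ 1, probabilities p_1,…,p_L and a mean μ > 0 with κ > L+1, and let G = G(p_L). If z̃_G ≤ e^{−2/(L+1)}, then the equation μ·s = g_G'(s) has a unique solution z̃_G^{(μ)} in [0,1), and z̃_m → z̃_G^{(μ)} as m → ∞. -/
open scoped BigOperators

open Set Filter Topology

/-! The mean of `G` is `∑_{d ≤ L} d p_d + (L+1) p_{>L} < μ` because `κ > L+1`, so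
`h(s) = g_G'(s) - μ s` is convex on `[0,1]` with `h 0 ≥ 0 > h 1`. Hence `h` has exactly one zero
`z⋆` in `[0,1)`, and on either side of `z⋆` it stays away from `0` at least linearly, with slope
`-h 1`. Passing from `G` to `G_m` moves the mass `r_m p_{>L}` from `L+1` to `m`, which changes `g'`
by `r_m p_{>L} (m s^{m-1} - (L+1) s^L)`; this tends to `0` uniformly on every `[0,θ]` with `θ < 1`,
so for large `m` the smallest zero of `g_{G_m}'(s) - μ s` is trapped near `z⋆`. -/

section Convexity

variable {f : ℝ → ℝ} {z t : ℝ}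

theorem ConvexOn.apply_one_mul_sub_le_of_le_root (hf : ConvexOn ℝ (Icc 0 1) f) (hz0 : 0 ≤ z)
    (hz1 : z < 1) (hfz : f z = 0) (hf1 : f 1 ≤ 0) (ht0 : 0 ≤ t) (htz : t ≤ z) :
    f 1 * (t - z) ≤ f t := by
  rcases htz.lt_or_eq with htz | rfl
  · have hsec := hf.secant_mono ⟨hz0, hz1.le⟩ ⟨ht0, htz.le.trans hz1.le⟩ ⟨zero_le_one, le_rfl⟩
      htz.ne hz1.ne' (htz.le.trans hz1.le)
    have hslope : f 1 / (1 - z) ≤ f 1 := by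
      rw [div_le_iff₀ (sub_pos.2 hz1)]; nlinarith
    rw [hfz, sub_zero, sub_zero] at hsec
    rw [← div_le_iff_of_neg (sub_neg.2 htz)]
    exact hsec.trans hslope
  · simp [hfz]

theorem ConvexOn.le_apply_one_mul_sub_of_root_le (hf : ConvexOn ℝ (Icc 0 1) f) (hz0 : 0 ≤ z)
    (hz1 : z < 1) (hfz : f z = 0) (hf1 : f 1 ≤ 0) (hzt : z ≤ t) (ht1 : t ≤ 1) :
    f t ≤ f 1 * (t - z) := by
  rcases hzt.lt_or_eq with hzt | rfl
  · have hsec := hf.secant_mono ⟨hz0, hz1.le⟩ ⟨hz0.trans hzt.le, ht1⟩ ⟨zero_le_one, le_rfl⟩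
      hzt.ne' hz1.ne' ht1
    have hslope : f 1 / (1 - z) ≤ f 1 := by
      rw [div_le_iff₀ (sub_pos.2 hz1)]; nlinarith
    rw [hfz, sub_zero, sub_zero] at hsec
    rw [← div_le_iff₀ (sub_pos.2 hzt)]
    exact hsec.trans hslope
  · simp [hfz]

theorem ConvexOn.sub_const_mul (hf : ConvexOn ℝ (Icc 0 1) f) (μ : ℝ) :
    ConvexOn ℝ (Icc 0 1) fun s => f s - μ * s :=
  hf.sub ((LinearMap.mulLeft ℝ μ).concaveOn (convex_Icc 0 1))

theorem existsUnique_root_of_convexOn {μ : ℝ} (hf : ConvexOn ℝ (Icc 0 1) f)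
    (hfc : ContinuousOn f (Icc 0 1)) (hf0 : 0 ≤ f 0) (hf1 : f 1 < μ) :
    ∃! z, z ∈ Ico 0 1 ∧ μ * z = f z := by
  obtain ⟨z, hz, hfz⟩ : ∃ z ∈ Icc (0 : ℝ) 1, f z - μ * z = 0 :=
    intermediate_value_Icc' (f := fun s => f s - μ * s) zero_le_one
      (hfc.sub (continuousOn_const.mul continuousOn_id)) ⟨by linarith, by simpa using hf0⟩
  have hz1 : z < 1 := hz.2.lt_of_ne (by rintro rfl; linarith)
  refine ⟨z, ⟨⟨hz.1, hz1⟩, by linarith⟩, fun y ⟨hy, hfy⟩ => ?_⟩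
  have hroot_le : ∀ a b, a ∈ Ico (0 : ℝ) 1 → b ∈ Ico (0 : ℝ) 1 → μ * a = f a → μ * b = f b →
      a ≤ b := by
    intro a b ha hb hfa hfb
    by_contra! hba
    have := (hf.sub_const_mul μ).apply_one_mul_sub_le_of_le_root ha.1 ha.2
      (by simp [hfa]) (by linarith) hb.1 hba.le
    nlinarith
  exact le_antisymm (hroot_le y z hy ⟨hz.1, hz1⟩ hfy (by linarith))
    (hroot_le z y ⟨hz.1, hz1⟩ hy (by linarith) hfy)

theorem le_of_isLeast_root {F : ℝ → ℝ} {μ z θ : ℝ}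
    (hz : IsLeast {s ∈ Icc 0 1 | μ * s = F s} z) (hF : ContinuousOn F (Icc 0 1)) (hF0 : 0 ≤ F 0)
    (hθ : θ ∈ Icc 0 1) (hFθ : F θ < μ * θ) : z ≤ θ := by
  obtain ⟨s, hs, hFs⟩ := intermediate_value_Icc' (f := fun s => F s - μ * s) hθ.1
    ((hF.sub (continuousOn_const.mul continuousOn_id)).mono (Icc_subset_Icc_right hθ.2))
    ⟨(sub_neg.2 hFθ).le, by simpa using hF0⟩
  exact (hz.2 ⟨⟨hs.1, hs.2.trans hθ.2⟩, by linarith [hFs]⟩).trans hs.2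

theorem tendsto_of_isLeast_root {ι : Type*} {l : Filter ι} {F : ι → ℝ → ℝ} {z : ι → ℝ}
    {μ zstar : ℝ} (hf : ConvexOn ℝ (Icc 0 1) f) (hf1 : f 1 < μ) (hzstar : zstar ∈ Ico 0 1)
    (hroot : μ * zstar = f zstar) (hF : ∀ θ ∈ Ico (0 : ℝ) 1, TendstoUniformlyOn F f l (Icc 0 θ))
    (hFc : ∀ᶠ i in l, ContinuousOn (F i) (Icc 0 1)) (hF0 : ∀ᶠ i in l, 0 ≤ F i 0)
    (hz : ∀ᶠ i in l, IsLeast {s ∈ Icc 0 1 | μ * s = F i s} (z i)) :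
    Tendsto z l (𝓝 zstar) := by
  have hh := hf.sub_const_mul μ
  have hhz : f zstar - μ * zstar = 0 := by linarith
  rw [Metric.tendsto_nhds]
  intro ε hε
  set η := min (ε / 2) ((1 - zstar) / 2)
  have hη : 0 < η := lt_min (by linarith) (by linarith [hzstar.2])
  have hθ : zstar + η ∈ Ico (0 : ℝ) 1 :=
    ⟨by linarith [hzstar.1], by linarith [min_le_right (ε / 2) ((1 - zstar) / 2)]⟩
  set δ := (μ - f 1) * η
  have hδ : 0 < δ := mul_pos (by linarith) hη
  have hleft : ∀ t, 0 ≤ t → t ≤ zstar - η → δ ≤ f t - μ * t := fun t ht0 ht => by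
    have := hh.apply_one_mul_sub_le_of_le_root hzstar.1 hzstar.2 hhz (by linarith) ht0
      (by linarith)
    nlinarith
  have hright : f (zstar + η) - μ * (zstar + η) ≤ -δ := by
    have := hh.le_apply_one_mul_sub_of_root_le hzstar.1 hzstar.2 hhz (by linarith)
      (by linarith) hθ.2.le
    nlinarith
  filter_upwards [Metric.tendstoUniformlyOn_iff.1 (hF _ hθ) δ hδ, hFc, hF0, hz]
    with i hclose hFic hFi0 hzi
  have hzi0 : 0 ≤ z i := hzi.1.1.1
  have hlow : zstar - η < z i := by
    by_contra! hle
    have hdist := hclose (z i) ⟨hzi0, by linarith⟩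
    rw [Real.dist_eq, abs_lt] at hdist
    linarith [hleft (z i) hzi0 hle, hzi.1.2]
  have hup : z i ≤ zstar + η := by
    have hdist := hclose (zstar + η) ⟨hθ.1, le_rfl⟩
    rw [Real.dist_eq, abs_lt] at hdist
    exact le_of_isLeast_root hzi hFic hFi0 ⟨hθ.1, hθ.2.le⟩ (by linarith)
  rw [Real.dist_eq, abs_lt]
  constructor <;> linarith [min_le_left (ε / 2) ((1 - zstar) / 2)]

end Convexity

section DegreeDist

theorem pgfD_zero (F : DegreeDist) : pgfD F 0 = F.p 1 := by
  rw [pgfD, tsum_eq_single 1 fun d hd => ?_]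
  · simp
  · rcases d with _ | _ | d
    · simp
    · exact absurd rfl hd
    · simp

theorem pgfD_eq_sum (F : DegreeDist) {N : ℕ} (hN : ∀ d, N < d → F.p d = 0) (s : ℝ) :
    pgfD F s = ∑ d ∈ Finset.range (N + 1), (d : ℝ) * F.p d * s ^ (d - 1) :=
  tsum_eq_sum fun d hd => by simp [hN d (by simpa [Nat.lt_succ_iff] using hd)]

theorem continuous_pgfD (F : DegreeDist) {N : ℕ} (hN : ∀ d, N < d → F.p d = 0) :
    Continuous (pgfD F) := by
  rw [funext (pgfD_eq_sum F hN)]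
  fun_prop

theorem convexOn_pgfD (F : DegreeDist) {N : ℕ} (hN : ∀ d, N < d → F.p d = 0) :
    ConvexOn ℝ (Icc 0 1) (pgfD F) := by
  rw [funext (pgfD_eq_sum F hN), ← Finset.sum_fn]
  refine Finset.sum_induction _ (ConvexOn ℝ (Icc 0 1)) (fun _ _ => ConvexOn.add)
    (convexOn_const 0 (convex_Icc 0 1)) fun d _ => ?_
  exact ((convexOn_pow (d - 1)).subset Icc_subset_Ici_self (convex_Icc 0 1)).smul
    (mul_nonneg d.cast_nonneg (F.nonneg d))

variable {L : ℕ} {p : ℕ → ℝ} {μ : ℝ} {G : DegreeDist}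

theorem IsG.pgfD_one (hG : IsG L p G) :
    pgfD G 1 = ∑ d ∈ Finset.Icc 1 L, (d : ℝ) * p d + ((L : ℝ) + 1) * pGt L p := by
  rw [pgfD_eq_sum G hG.2.2, Finset.sum_range_succ, Finset.range_eq_Ico,
    Finset.sum_eq_sum_Ico_succ_bot (Nat.succ_pos L), Nat.succ_eq_add_one, zero_add,
    Finset.Ico_add_one_right_eq_Icc, hG.2.1]
  simp only [one_pow, mul_one, Nat.cast_zero, zero_mul, zero_add, Nat.cast_add, Nat.cast_one]
  congr 1
  exact Finset.sum_congr rfl fun d hd => by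
    rw [hG.1 d (Finset.mem_Icc.1 hd).1 (Finset.mem_Icc.1 hd).2]

theorem IsG.pgfD_one_lt (hG : IsG L p G) (hp : 0 < pGt L p) (hκ : (L : ℝ) + 1 < kappa L p μ) :
    pgfD G 1 < μ := by
  rw [kappa, lt_div_iff₀ hp] at hκ
  rw [hG.pgfD_one]
  linarith

variable {m : ℕ} {Gm : DegreeDist}

theorem IsGm.p_eq_zero (hGm : IsGm L p μ m Gm) (d : ℕ) (hd : max m (L + 1) < d) : Gm.p d = 0 :=
  hGm.2.2.2 d (lt_of_le_of_lt (le_max_right _ _) hd) (lt_of_le_of_lt (le_max_left _ _) hd).ne'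

theorem IsGm.p_sub_p (hG : IsG L p G) (hGm : IsGm L p μ m Gm) (hm : L + 1 < m) (d : ℕ) :
    Gm.p d - G.p d = rmass L (kappa L p μ) m * pGt L p *
      ((if d = m then 1 else 0) - (if d = L + 1 then 1 else 0)) := by
  obtain ⟨hGm1, hGm2, hGm3, hGm4⟩ := hGm
  obtain ⟨hG1, hG2, hG3⟩ := hG
  rcases Nat.lt_trichotomy d (L + 1) with hd | rfl | hd
  · rcases d.eq_zero_or_pos with rfl | hd0
    · simp [Gm.zero, G.zero]
      omega
    · simp [hGm1 d hd0 (by omega), hG1 d hd0 (by omega), hd.ne, (hd.trans hm).ne]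
  · simp [hGm2, hG2, hm.ne]
    ring
  · by_cases hdm : d = m
    · subst hdm
      simp [hGm3, hG3 d hd, hd.ne']
    · simp [hGm4 d hd hdm, hG3 d hd, hdm, hd.ne']

theorem IsGm.pgfD_sub_pgfD (hG : IsG L p G) (hGm : IsGm L p μ m Gm) (hm : L + 1 < m) (s : ℝ) :
    pgfD Gm s - pgfD G s = rmass L (kappa L p μ) m * pGt L p *
      ((m : ℝ) * s ^ (m - 1) - ((L : ℝ) + 1) * s ^ L) := by
  have hGN : ∀ d, max m (L + 1) < d → G.p d = 0 :=
    fun d hd => hG.2.2 d (lt_of_le_of_lt (le_max_right _ _) hd)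
  rw [pgfD_eq_sum Gm hGm.p_eq_zero, pgfD_eq_sum G hGN, ← Finset.sum_sub_distrib]
  set c := rmass L (kappa L p μ) m * pGt L p
  have hsummand : ∀ d : ℕ, (d : ℝ) * Gm.p d * s ^ (d - 1) - d * G.p d * s ^ (d - 1) =
      c * ((if d = m then (d : ℝ) * s ^ (d - 1) else 0) -
        (if d = L + 1 then (d : ℝ) * s ^ (d - 1) else 0)) := fun d => by
    rw [← sub_mul, ← mul_sub, hGm.p_sub_p hG hm]
    split_ifs <;> ring
  have hmN : m ∈ Finset.range (max m (L + 1) + 1) := by simp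
  have hLN : L + 1 ∈ Finset.range (max m (L + 1) + 1) := by simp
  simp_rw [hsummand, ← Finset.mul_sum, Finset.sum_sub_distrib, Finset.sum_ite_eq', if_pos hmN,
    if_pos hLN]
  push_cast
  ring

theorem IsGm.abs_pgfD_sub_pgfD_le (hG : IsG L p G) (hGm : IsGm L p μ m Gm) (hm : L + 1 < m)
    {s θ : ℝ} (hs : s ∈ Icc 0 θ) (hθ : θ ≤ 1) :
    |pgfD Gm s - pgfD G s| ≤
      |rmass L (kappa L p μ) m * pGt L p| * ((m : ℝ) * θ ^ (m - 1) + ((L : ℝ) + 1)) := by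
  rw [hGm.pgfD_sub_pgfD hG hm, abs_mul]
  gcongr
  have hmθ : (m : ℝ) * s ^ (m - 1) ≤ m * θ ^ (m - 1) :=
    mul_le_mul_of_nonneg_left (pow_le_pow_left₀ hs.1 hs.2 _) m.cast_nonneg
  have hLθ : ((L : ℝ) + 1) * s ^ L ≤ (L : ℝ) + 1 :=
    mul_le_of_le_one_right (by positivity) (pow_le_one₀ hs.1 (hs.2.trans hθ))
  have hm0 : 0 ≤ (m : ℝ) * s ^ (m - 1) := mul_nonneg m.cast_nonneg (pow_nonneg hs.1 _)
  have hL0 : 0 ≤ ((L : ℝ) + 1) * s ^ L := mul_nonneg (by positivity) (pow_nonneg hs.1 _)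
  rw [abs_le]
  constructor <;> linarith

end DegreeDist

theorem tendsto_rmass (L : ℕ) (κ : ℝ) : Tendsto (rmass L κ) atTop (𝓝 0) :=
  tendsto_const_nhds.div_atTop <| by
    simpa [sub_eq_add_neg] using tendsto_atTop_add_const_right atTop (-((L : ℝ) + 1))
      (tendsto_natCast_atTop_atTop (R := ℝ))

theorem tendsto_natCast_mul_pow_pred {θ : ℝ} (hθ : θ ∈ Ico 0 1) :
    Tendsto (fun m : ℕ => (m : ℝ) * θ ^ (m - 1)) atTop (𝓝 0) := by
  have hsucc : Tendsto (fun n : ℕ => ((n : ℝ) + 1) * θ ^ n) atTop (𝓝 0) := by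
    simpa [add_mul] using (tendsto_self_mul_const_pow_of_lt_one hθ.1 hθ.2).add
      (tendsto_pow_atTop_nhds_zero_of_lt_one hθ.1 hθ.2)
  refine (hsucc.comp (tendsto_sub_atTop_nat 1)).congr' ?_
  filter_upwards [eventually_ge_atTop 1] with m hm
  simp [Nat.cast_sub hm]

theorem tendstoUniformlyOn_pgfD_of_isGm {L : ℕ} {p : ℕ → ℝ} {μ θ : ℝ} {G : DegreeDist}
    {Gm : ℕ → DegreeDist} (hG : IsG L p G) (hGm : ∀ᶠ m in atTop, IsGm L p μ m (Gm m))
    (hθ : θ ∈ Ico 0 1) :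
    TendstoUniformlyOn (fun m => pgfD (Gm m)) (pgfD G) atTop (Icc 0 θ) := by
  have hbound : Tendsto (fun m : ℕ => |rmass L (kappa L p μ) m * pGt L p| *
      ((m : ℝ) * θ ^ (m - 1) + ((L : ℝ) + 1))) atTop (𝓝 0) := by
    simpa using (((tendsto_rmass L _).mul_const (pGt L p)).abs).mul
      ((tendsto_natCast_mul_pow_pred hθ).add_const ((L : ℝ) + 1))
  rw [Metric.tendstoUniformlyOn_iff]
  intro ε hε
  filter_upwards [hbound.eventually (gt_mem_nhds hε), hGm, eventually_gt_atTop (L + 1)]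
    with m hbm hGmm hm s hs
  rw [dist_comm, Real.dist_eq]
  exact (hGmm.abs_pgfD_sub_pgfD_le hG hm hs hθ.2.le).trans_lt hbm

theorem IsSmallestRoot.isLeast {F : DegreeDist} {μ z : ℝ} (hz : IsSmallestRoot F μ z) :
    IsLeast {s ∈ Icc 0 1 | μ * s = pgfD F s} z :=
  ⟨⟨hz.1, hz.2.1⟩, fun s hs => hz.2.2 s hs.1 hs.2⟩

theorem tail_does_not_determine_giant_stmt10_general
    (L : ℕ) (p : ℕ → ℝ)
    (hplt : ∑ i ∈ Finset.Icc 1 L, p i < 1)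
    (μ : ℝ) (hκ : (L : ℝ) + 1 < kappa L p μ)
    (G : DegreeDist) (hG : IsG L p G)
    (Gm : ℕ → DegreeDist)
    (hGm : ∀ m : ℕ, kappa L p μ < (m : ℝ) → IsGm L p μ m (Gm m))
    (zm : ℕ → ℝ)
    (hzm : ∀ m : ℕ, kappa L p μ < (m : ℝ) → IsSmallestRoot (Gm m) μ (zm m)) :
    (∃! zstar : ℝ, zstar ∈ Set.Ico (0 : ℝ) 1 ∧ μ * zstar = pgfD G zstar) ∧
    ∀ zstar : ℝ, zstar ∈ Set.Ico (0 : ℝ) 1 ∧ μ * zstar = pgfD G zstar →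
      Filter.Tendsto zm Filter.atTop (nhds zstar) := by
  have hG1 : pgfD G 1 < μ := hG.pgfD_one_lt (sub_pos.2 hplt) hκ
  have hconv : ConvexOn ℝ (Icc 0 1) (pgfD G) := convexOn_pgfD G hG.2.2
  have hlarge : ∀ᶠ m : ℕ in atTop, kappa L p μ < m :=
    tendsto_natCast_atTop_atTop.eventually_gt_atTop _
  refine ⟨existsUnique_root_of_convexOn hconv (continuous_pgfD G hG.2.2).continuousOn
    (pgfD_zero G ▸ G.nonneg 1) hG1, fun zstar ⟨hzstar, hroot⟩ => ?_⟩
  exact tendsto_of_isLeast_root hconv hG1 hzstar hroot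
    (fun θ hθ => tendstoUniformlyOn_pgfD_of_isGm hG (hlarge.mono hGm) hθ)
    (hlarge.mono fun m hm => (continuous_pgfD _ (hGm m hm).p_eq_zero).continuousOn)
    (Eventually.of_forall fun m => pgfD_zero (Gm m) ▸ (Gm m).nonneg 1)
    (hlarge.mono fun m hm => (hzm m hm).isLeast)

/-- If `κ > L+1` and `z̃_G ≤ e^{-2/(L+1)}`, then `μ s = g_G'(s)` has a unique
solution `z̃_G^{(μ)}` in `[0,1)`, and `z̃_m → z̃_G^{(μ)}` as `m → ∞`. -/
theorem tail_does_not_determine_giant_stmt10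
    (L : ℕ) (hL : 1 ≤ L) (p : ℕ → ℝ)
    (hp : ∀ i, 0 ≤ p i) (hplt : ∑ i ∈ Finset.Icc 1 L, p i < 1)
    (μ : ℝ) (hμ : 0 < μ) (hκ : (L : ℝ) + 1 < kappa L p μ)
    (G : DegreeDist) (hG : IsG L p G)
    (zG : ℝ) (hzG : IsSmallestRoot G (mu G) zG)
    (hcond : zG ≤ Real.exp (-(2 / ((L : ℝ) + 1))))
    (Gm : ℕ → DegreeDist)
    (hGm : ∀ m : ℕ, kappa L p μ < (m : ℝ) → IsGm L p μ m (Gm m))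
    (zm : ℕ → ℝ)
    (hzm : ∀ m : ℕ, kappa L p μ < (m : ℝ) → IsSmallestRoot (Gm m) μ (zm m)) :
    (∃! zstar : ℝ, zstar ∈ Set.Ico (0 : ℝ) 1 ∧ μ * zstar = pgfD G zstar) ∧
    ∀ zstar : ℝ, zstar ∈ Set.Ico (0 : ℝ) 1 ∧ μ * zstar = pgfD G zstar →
      Filter.Tendsto zm Filter.atTop (nhds zstar) :=
  tail_does_not_determine_giant_stmt10_general L p hplt μ hκ G hG Gm hGm zm hzm
end

section
/- Let N be a random variable taking values in the nonnegative integers with finite mean κ. Then for every s ∈ [0,1], E[s^N] ≥ (⌊κ⌋+1−κ)·s^{⌊κ⌋} + (κ−⌊κ⌋)·s^{⌊κ⌋+1}. -/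
open scoped BigOperators

/-! A sequence `f` with nondecreasing increments lies above the line through `(n, f n)` and
`(n + 1, f (n + 1))`, for every `n`. For `s ∈ [0, 1]` the sequence `k ↦ s ^ k` is of this kind,
and averaging the line inequality against `q` gives
`E[s ^ N] ≥ s ^ n + (κ - n) (s ^ (n + 1) - s ^ n)`, which for `n = ⌊κ⌋` is the claimed bound. -/

lemma summable_of_tsum_ne_zero {α β : Type*} [AddCommMonoid α] [TopologicalSpace α] {f : β → α}
    (h : ∑' b, f b ≠ 0) : Summable f :=
  by_contra (h ∘ tsum_eq_zero_of_not_summable)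

lemma secant_le_of_monotone_sub {f : ℕ → ℝ} (hf : Monotone fun k ↦ f (k + 1) - f k) (n k : ℕ) :
    f n + ((k : ℝ) - n) * (f (n + 1) - f n) ≤ f k := by
  rcases le_total n k with hnk | hkn
  · induction k, hnk using Nat.le_induction with
    | base => simp
    | succ k hnk ih =>
      have := hf hnk
      push_cast
      linarith
  · induction hkn using Nat.decreasingInduction with
    | self => simp
    | of_succ k hkn ih =>
      have := hf hkn.le
      push_cast at ih
      linarith

lemma monotone_pow_succ_sub_pow {s : ℝ} (h0 : 0 ≤ s) (h1 : s ≤ 1) :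
    Monotone fun k : ℕ ↦ s ^ (k + 1) - s ^ k := by
  intro a b hab
  have : s ^ b * (1 - s) ≤ s ^ a * (1 - s) :=
    mul_le_mul_of_nonneg_right (pow_le_pow_of_le_one h0 h1 hab) (by linarith)
  simp only [pow_succ]
  linarith

lemma secant_le_tsum_of_monotone_sub {f : ℕ → ℝ} (hf : Monotone fun k ↦ f (k + 1) - f k)
    {q : ℕ → ℝ} (hq : ∀ k, 0 ≤ q k) (hsum : ∑' k, q k = 1)
    (hmean : Summable fun k : ℕ ↦ (k : ℝ) * q k) (hqf : Summable fun k ↦ q k * f k) (n : ℕ) :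
    f n + ((∑' k : ℕ, (k : ℝ) * q k) - n) * (f (n + 1) - f n) ≤ ∑' k, q k * f k := by
  have hq_summable : Summable q := summable_of_tsum_ne_zero (by simp [hsum])
  set b := f (n + 1) - f n
  have hline : ∀ k : ℕ, q k * (f n + ((k : ℝ) - n) * b) = (f n - n * b) * q k + b * (k * q k) :=
    fun k ↦ by ring
  calc f n + ((∑' k : ℕ, (k : ℝ) * q k) - n) * b
      = ∑' k : ℕ, ((f n - n * b) * q k + b * (k * q k)) := by
        rw [(hq_summable.mul_left _).tsum_add (hmean.mul_left b), tsum_mul_left, tsum_mul_left,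
          hsum]
        ring
    _ = ∑' k : ℕ, q k * (f n + ((k : ℝ) - n) * b) := by simp only [hline]
    _ ≤ ∑' k, q k * f k := by
        refine Summable.tsum_le_tsum
          (fun k ↦ mul_le_mul_of_nonneg_left (secant_le_of_monotone_sub hf n k) (hq k)) ?_ hqf
        simpa only [hline] using (hq_summable.mul_left _).add (hmean.mul_left b)

/-- For a distribution `q` on `ℕ` with mean `κ` and `s ∈ [0,1]`,
`E[s^N] ≥ (⌊κ⌋+1-κ) s^{⌊κ⌋} + (κ-⌊κ⌋) s^{⌊κ⌋+1}`. -/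
theorem tail_does_not_determine_giant_stmt13
    (q : ℕ → ℝ) (hq : ∀ k, 0 ≤ q k) (hsum : ∑' k : ℕ, q k = 1)
    (hmean : Summable fun k : ℕ => (k : ℝ) * q k)
    (κ : ℝ) (hκ : κ = ∑' k : ℕ, (k : ℝ) * q k)
    (s : ℝ) (hs : s ∈ Set.Icc (0 : ℝ) 1) :
    ((⌊κ⌋₊ : ℝ) + 1 - κ) * s ^ ⌊κ⌋₊ + (κ - (⌊κ⌋₊ : ℝ)) * s ^ (⌊κ⌋₊ + 1) ≤
      ∑' k : ℕ, q k * s ^ k := by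
  obtain ⟨h0, h1⟩ := hs
  have hq_summable : Summable q := summable_of_tsum_ne_zero (by simp [hsum])
  have hqs : Summable fun k ↦ q k * s ^ k :=
    hq_summable.of_nonneg_of_le (fun k ↦ mul_nonneg (hq k) (pow_nonneg h0 k))
      (fun k ↦ mul_le_of_le_one_right (hq k) (pow_le_one₀ h0 h1))
  have := secant_le_tsum_of_monotone_sub (monotone_pow_succ_sub_pow h0 h1) hq hsum hmean hqs ⌊κ⌋₊
  rw [← hκ] at this
  linarith
end
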